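/- arXiv:1707.02808 — 2 statements merged into one kernel-verified Lean document; each statement's English description precedes it below -/
import Mathlib

section
/- (Exterior smash preserves cofibrations.) Let W₁ ⟶ W₁' be a map of retractive simplicial sets over X₁ and W₂ ⟶ W₂' a map of retractive simplicial sets over X₂, both of whose underlying maps of simplicial sets are monomorphisms. Then the induced map W₁ ⊼ W₂ ⟶ W₁' ⊼ W₂' of retractive simplicial sets over X₁ ⨯ X₂ has underlying map a monomorphism. -/
open CategoryTheory CategoryTheory.Limits Simplicial

universe u

attribute [local simp] pushout.inl_desc pushout.inr_desc pushout.inl_desc_assoc pushout.inr_desc_assoc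

/-- A retractive simplicial set over `X`. -/
structure Retr (X : SSet.{u}) where
  Y : SSet.{u}
  r : Y ⟶ X
  s : X ⟶ Y
  retr : s ≫ r = 𝟙 X

namespace Retr

variable {X X₁ X₂ : SSet.{u}}

/-- The "wedge" `Y₁ ⨯ X₂ ∪_(X₁ ⨯ X₂) X₁ ⨯ Y₂`. -/
noncomputable abbrev wedgeObj (W₁ : Retr X₁) (W₂ : Retr X₂) : SSet.{u} :=
  pushout (prod.map W₁.s (𝟙 X₂)) (prod.map (𝟙 X₁) W₂.s)

/-- The canonical map from the wedge to the product. -/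
noncomputable def wedgeToProd (W₁ : Retr X₁) (W₂ : Retr X₂) :
    wedgeObj W₁ W₂ ⟶ W₁.Y ⨯ W₂.Y :=
  pushout.desc (prod.map (𝟙 W₁.Y) W₂.s) (prod.map W₁.s (𝟙 W₂.Y))
    (by simp [prod.map_map])

/-- The map from the wedge to the base, induced by the retractions. -/
noncomputable def wedgeToBase (W₁ : Retr X₁) (W₂ : Retr X₂) :
    wedgeObj W₁ W₂ ⟶ X₁ ⨯ X₂ :=
  pushout.desc (prod.map W₁.r (𝟙 X₂)) (prod.map (𝟙 X₁) W₂.r)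
    (by simp [prod.map_map, W₁.retr, W₂.retr])

/-- The exterior smash product of retractive simplicial sets. -/
noncomputable def esmash (W₁ : Retr X₁) (W₂ : Retr X₂) : Retr (X₁ ⨯ X₂) where
  Y := pushout (wedgeToBase W₁ W₂) (wedgeToProd W₁ W₂)
  s := pushout.inl _ _
  r := pushout.desc (𝟙 _) (prod.map W₁.r W₂.r) (by
    apply pushout.hom_ext <;>
      simp [wedgeToBase, wedgeToProd, prod.map_map, W₁.retr, W₂.retr])
  retr := by simp

/-- The canonical quotient map `Y₁ ⨯ Y₂ ⟶ Y₁ ⊼ Y₂`. -/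
noncomputable def esmashQuot (W₁ : Retr X₁) (W₂ : Retr X₂) :
    (W₁.Y ⨯ W₂.Y) ⟶ (esmash W₁ W₂).Y :=
  pushout.inr _ _

/-- Pushforward of a retractive simplicial set along a map of base simplicial sets. -/
noncomputable def pushf {X X' : SSet.{u}} (f : X ⟶ X') (W : Retr X) : Retr X' where
  Y := pushout W.s f
  s := pushout.inr _ _
  r := pushout.desc (W.r ≫ f) (𝟙 X') (by
    rw [← Category.assoc, W.retr, Category.id_comp, Category.comp_id])
  retr := by simp

/-- The internal smash product over a base with multiplication `μ`. -/
noncomputable def ismash (μ : X ⨯ X ⟶ X) (W₁ W₂ : Retr X) : Retr X :=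
  pushf μ (esmash W₁ W₂)

/-- The canonical quotient map `Y₁ ⨯ Y₂ ⟶ Y₁ ∧ Y₂`. -/
noncomputable def ismashQuot (μ : X ⨯ X ⟶ X) (W₁ W₂ : Retr X) :
    (W₁.Y ⨯ W₂.Y) ⟶ (ismash μ W₁ W₂).Y :=
  esmashQuot W₁ W₂ ≫ pushout.inl (esmash W₁ W₂).s μ

/-- Morphisms of retractive simplicial sets over a fixed base. -/
structure RHom {X : SSet.{u}} (W W' : Retr X) where
  f : W.Y ⟶ W'.Y
  hs : W.s ≫ f = W'.s
  hr : f ≫ W'.r = W.r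

/-- The identity morphism of a retractive simplicial set. -/
def RHom.id (W : Retr X) : RHom W W := ⟨𝟙 _, by simp, by simp⟩

/-- The map induced on wedges by a pair of morphisms of retractive simplicial sets. -/
noncomputable def wedgeMap {W₁ W₁' : Retr X₁} {W₂ W₂' : Retr X₂}
    (φ₁ : RHom W₁ W₁') (φ₂ : RHom W₂ W₂') : wedgeObj W₁ W₂ ⟶ wedgeObj W₁' W₂' :=
  pushout.map _ _ _ _ (prod.map φ₁.f (𝟙 X₂)) (prod.map (𝟙 X₁) φ₂.f) (𝟙 (X₁ ⨯ X₂))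
    (by simp [prod.map_map, φ₁.hs]) (by simp [prod.map_map, φ₂.hs])

/-- The map induced on exterior smash products by a pair of morphisms
of retractive simplicial sets. -/
noncomputable def esmashMap {W₁ W₁' : Retr X₁} {W₂ W₂' : Retr X₂}
    (φ₁ : RHom W₁ W₁') (φ₂ : RHom W₂ W₂') : RHom (esmash W₁ W₂) (esmash W₁' W₂') where
  f := pushout.map _ _ _ _ (𝟙 (X₁ ⨯ X₂)) (prod.map φ₁.f φ₂.f) (wedgeMap φ₁ φ₂)
    (by
      apply pushout.hom_ext <;>
        simp [wedgeMap, wedgeToBase, prod.map_map, φ₁.hr, φ₂.hr])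
    (by
      apply pushout.hom_ext <;>
        simp [wedgeMap, wedgeToProd, prod.map_map, φ₁.hs, φ₂.hs])
  hs := by simp [esmash]
  hr := by
    apply pushout.hom_ext <;>
      simp [esmash, prod.map_map, φ₁.hr, φ₂.hr]

/-- The map induced on pushforwards by a morphism of retractive simplicial sets. -/
noncomputable def pushfMap {X X' : SSet.{u}} (f : X ⟶ X') {W W' : Retr X}
    (φ : RHom W W') : RHom (pushf f W) (pushf f W') where
  f := pushout.map _ _ _ _ φ.f (𝟙 X') (𝟙 X) (by simp [φ.hs]) (by simp)
  hs := by simp [pushf]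
  hr := by
    apply pushout.hom_ext <;> simp [pushf, φ.hr]
    rw [← Category.assoc, φ.hr]

/-- The map induced on internal smash products by a pair of morphisms. -/
noncomputable def ismashMap (μ : X ⨯ X ⟶ X) {W₁ W₁' W₂ W₂' : Retr X}
    (φ₁ : RHom W₁ W₁') (φ₂ : RHom W₂ W₂') :
    RHom (ismash μ W₁ W₂) (ismash μ W₁' W₂') :=
  pushfMap μ (esmashMap φ₁ φ₂)

/-- The pushout of retractive simplicial sets along a pair of morphisms,
computed on underlying simplicial sets. -/
noncomputable def retrPushout {W₁ W₂ W₀ : Retr X} (u : RHom W₁ W₂) (v : RHom W₁ W₀) :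
    Retr X where
  Y := pushout u.f v.f
  s := W₂.s ≫ pushout.inl _ _
  r := pushout.desc W₂.r W₀.r (by rw [u.hr, v.hr])
  retr := by rw [Category.assoc, pushout.inl_desc, W₂.retr]

/-- The first structure map into the pushout of retractive simplicial sets. -/
noncomputable def pInl {W₁ W₂ W₀ : Retr X} (u : RHom W₁ W₂) (v : RHom W₁ W₀) :
    RHom W₂ (retrPushout u v) where
  f := pushout.inl _ _
  hs := rfl
  hr := by simp [retrPushout]

/-- The second structure map into the pushout of retractive simplicial sets. -/
noncomputable def pInr {W₁ W₂ W₀ : Retr X} (u : RHom W₁ W₂) (v : RHom W₁ W₀) :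
    RHom W₀ (retrPushout u v) where
  f := pushout.inr _ _
  hs := by
    show W₀.s ≫ (pushout.inr u.f v.f : _ ⟶ pushout u.f v.f) = W₂.s ≫ pushout.inl u.f v.f
    rw [← u.hs, ← v.hs, Category.assoc, Category.assoc, pushout.condition]
  hr := by simp [retrPushout]

/-- The sum of retractive simplicial sets over `X`. -/
noncomputable def retrSum (Y₁ Y₂ : Retr X) : Retr X where
  Y := pushout Y₁.s Y₂.s
  s := Y₁.s ≫ pushout.inl _ _
  r := pushout.desc Y₁.r Y₂.r (by rw [Y₁.retr, Y₂.retr])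
  retr := by rw [Category.assoc, pushout.inl_desc, Y₁.retr]

/-- The first sum inclusion. -/
noncomputable def sumInl (Y₁ Y₂ : Retr X) : RHom Y₁ (retrSum Y₁ Y₂) where
  f := pushout.inl _ _
  hs := rfl
  hr := by simp [retrSum]

/-- The second sum inclusion. -/
noncomputable def sumInr (Y₁ Y₂ : Retr X) : RHom Y₂ (retrSum Y₁ Y₂) where
  f := pushout.inr _ _
  hs := pushout.condition.symm
  hr := by simp [retrSum]

end Retr

open Retr

/-!
`SSet` is a presheaf topos, hence adhesive. The wedge `Y₁ ∨ Y₂` is the union of the subobjects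
`Y₁ ⨯ X₂` and `X₁ ⨯ Y₂` of `Y₁ ⨯ Y₂`, so it embeds into the product, and since unions are stable
under pullback, the wedge of the `Wᵢ` is the preimage of the wedge of the `Wᵢ'` under `φ₁ ⨯ φ₂`.
The map of smash products is therefore a map of pushouts `B ⊔_A D ⟶ B ⊔_{A'} D'` along a
pullback square of monos `D ↪ D'`, `A ↪ A'`; it is a pushout of the comparison map
`A' ⊔_A D ⟶ D'`, which is mono because it exhibits a union of two subobjects of `D'`.
-/

namespace CategoryTheory

open Limits

variable {C : Type*} [Category C]

theorem IsPullback.prod_map [HasBinaryProducts C]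
    {P₁ X₁ Y₁ Z₁ P₂ X₂ Y₂ Z₂ : C}
    {fst₁ : P₁ ⟶ X₁} {snd₁ : P₁ ⟶ Y₁} {f₁ : X₁ ⟶ Z₁} {g₁ : Y₁ ⟶ Z₁}
    {fst₂ : P₂ ⟶ X₂} {snd₂ : P₂ ⟶ Y₂} {f₂ : X₂ ⟶ Z₂} {g₂ : Y₂ ⟶ Z₂}
    (H₁ : IsPullback fst₁ snd₁ f₁ g₁) (H₂ : IsPullback fst₂ snd₂ f₂ g₂) :
    IsPullback (prod.map fst₁ fst₂) (prod.map snd₁ snd₂) (prod.map f₁ f₂) (prod.map g₁ g₂) := by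
  refine IsPullback.of_isLimit' ⟨by rw [prod.map_map, prod.map_map, H₁.w, H₂.w]⟩
    (PullbackCone.IsLimit.mk _
      (fun s => prod.lift
        (H₁.lift (s.fst ≫ prod.fst) (s.snd ≫ prod.fst) (by simpa using s.condition =≫ prod.fst))
        (H₂.lift (s.fst ≫ prod.snd) (s.snd ≫ prod.snd) (by simpa using s.condition =≫ prod.snd)))
      (fun s => by ext <;> simp [prod.lift_fst, prod.lift_snd])
      (fun s => by ext <;> simp [prod.lift_fst, prod.lift_snd]) (fun s m hfst hsnd => ?_))
  ext
  · exact H₁.hom_ext (by simpa [prod.lift_fst] using hfst =≫ prod.fst)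
      (by simpa [prod.lift_fst] using hsnd =≫ prod.fst)
  · exact H₂.hom_ext (by simpa [prod.lift_snd] using hfst =≫ prod.snd)
      (by simpa [prod.lift_snd] using hsnd =≫ prod.snd)

namespace Adhesive

variable [Adhesive C]

/-- A version of `Adhesive.desc_mono_of_mono` for arbitrary pullback and pushout squares:
the union of two subobjects is their pushout over their intersection. -/
theorem mono_of_isPullback_of_isPushout {W X Y Z P : C} {f : W ⟶ X} {g : W ⟶ Y}
    {a : X ⟶ Z} {b : Y ⟶ Z} [Mono a] [Mono b] (hpb : IsPullback f g a b)
    {inl : X ⟶ P} {inr : Y ⟶ P} (hpo : IsPushout f g inl inr)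
    {d : P ⟶ Z} (hl : inl ≫ d = a) (hr : inr ≫ d = b) : Mono d := by
  have hpo' : IsPushout (pullback.fst a b) (pullback.snd a b) inl inr :=
    hpo.of_iso hpb.isoPullback (Iso.refl _) (Iso.refl _) (Iso.refl _)
      (by simp) (by simp) (by simp) (by simp)
  have hd : d = hpo'.isoPushout.hom ≫ pushout.desc a b pullback.condition :=
    hpo'.hom_ext (by simp [hl]) (by simp [hr])
  rw [hd]
  infer_instance

/-- Pushouts along monos are stable under pullback: the pullback of `e` along `β` is the
pushout `Z'` of the pulled-back pieces. -/
theorem isPullback_of_isPushout_of_isPullback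
    {W X Y Z E : C} {f : W ⟶ X} {g : W ⟶ Y} {h : X ⟶ Z} {i : Y ⟶ Z} [Mono f]
    (H : IsPushout f g h i)
    {W' X' Y' Z' E' : C} {f' : W' ⟶ X'} {g' : W' ⟶ Y'} {h' : X' ⟶ Z'} {i' : Y' ⟶ Z'}
    (H' : IsPushout f' g' h' i')
    {αW : W' ⟶ W} {αX : X' ⟶ X} {αY : Y' ⟶ Y} {αZ : Z' ⟶ Z}
    (hf : IsPullback f' αW αX f) (hg : IsPullback g' αW αY g)
    (hh : h' ≫ αZ = αX ≫ h) (hi : i' ≫ αZ = αY ≫ i)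
    {e : Z ⟶ E} {e' : Z' ⟶ E'} {β : E' ⟶ E} [HasPullback e β]
    (hhe : IsPullback (h' ≫ e') αX β (h ≫ e)) (hie : IsPullback (i' ≫ e') αY β (i ≫ e)) :
    IsPullback αZ e' e β := by
  have hT := IsPullback.of_hasPullback e β
  let hX : X' ⟶ pullback e β := pullback.lift (αX ≫ h) (h' ≫ e') (by simpa using hhe.w.symm)
  let hY : Y' ⟶ pullback e β := pullback.lift (αY ≫ i) (i' ≫ e') (by simpa using hie.w.symm)
  have frontX : IsPullback hX αX (pullback.fst e β) h :=
    IsPullback.of_right (by rwa [pullback.lift_snd]) (pullback.lift_fst _ _ _) hT.flip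
  have frontY : IsPullback hY αY (pullback.fst e β) i :=
    IsPullback.of_right (by rwa [pullback.lift_snd]) (pullback.lift_fst _ _ _) hT.flip
  have top : IsPushout f' g' hX hY := by
    refine (Adhesive.van_kampen H f' g' hX hY αW αX αY _ hf hg frontX.toCommSq frontY.toCommSq
      ⟨?_⟩).2 ⟨frontX, frontY⟩
    apply pullback.hom_ext
    · simp only [Category.assoc, hX, hY, pullback.lift_fst, reassoc_of% hf.w, reassoc_of% hg.w,
        H.w]
    · simp only [Category.assoc, hX, hY, pullback.lift_snd, H'.w_assoc]
  have hfst : (H'.isoIsPushout _ _ top).hom ≫ pullback.fst e β = αZ :=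
    H'.hom_ext (by simp [hX, hh, pullback.lift_fst]) (by simp [hY, hi, pullback.lift_fst])
  have hsnd : (H'.isoIsPushout _ _ top).hom ≫ pullback.snd e β = e' :=
    H'.hom_ext (by simp [hX, pullback.lift_snd]) (by simp [hY, pullback.lift_snd])
  exact IsPullback.of_iso_pullback ⟨by rw [← hfst, ← hsnd, Category.assoc, Category.assoc,
    pullback.condition]⟩ (H'.isoIsPushout _ _ top ≪≫ hT.isoPullback) (by simpa using hfst)
    (by simpa using hsnd)

theorem mono_of_isPushout_of_isPushout_of_isPullback
    {A B D P A' D' P' : C} {t : A ⟶ B} {m : A ⟶ D} {i : B ⟶ P} {j : D ⟶ P}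
    (H : IsPushout t m i j)
    {t' : A' ⟶ B} {m' : A' ⟶ D'} {i' : B ⟶ P'} {j' : D' ⟶ P'} (H' : IsPushout t' m' i' j')
    {α : A ⟶ A'} {β : D ⟶ D'} [Mono m'] [Mono β] [HasPushout α m]
    (ht : α ≫ t' = t) (hpb : IsPullback α m m' β)
    {π : P ⟶ P'} (hi : i ≫ π = i') (hj : j ≫ π = β ≫ j') : Mono π := by
  have hQ := IsPushout.of_hasPushout α m
  let d : pushout α m ⟶ D' := pushout.desc m' β hpb.w
  have : Mono d := mono_of_isPullback_of_isPushout hpb hQ (pushout.inl_desc _ _ _)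
    (pushout.inr_desc _ _ _)
  let k : pushout α m ⟶ P := pushout.desc (t' ≫ i) j (by rw [reassoc_of% ht, H.w])
  have hleft : IsPushout (pushout.inl α m) t' k i :=
    IsPushout.of_top (by simpa [k, ht] using H.flip) (pushout.inl_desc _ _ _) hQ.flip
  have hright : IsPushout d k j' π := by
    refine IsPushout.of_left (by simpa [d, hi] using H'.flip) ?_ hleft
    apply pushout.hom_ext
    · simp [d, k, hi, H'.w]
    · simp [d, k, hj]
  exact Adhesive.mono_of_isPushout_of_mono_left hright

end Adhesive

end CategoryTheory

namespace Retr

variable {X X₁ X₂ : SSet.{u}}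

instance isSplitMono_s (W : Retr X) : IsSplitMono W.s :=
  IsSplitMono.mk' ⟨W.r, W.retr⟩

theorem RHom.isPullback_s {W W' : Retr X} (φ : RHom W W') [Mono φ.f] :
    IsPullback (𝟙 X) W.s W'.s φ.f :=
  IsPullback.of_horiz_isIso_mono ⟨by rw [Category.id_comp, φ.hs]⟩

instance mono_wedgeToProd (W₁ : Retr X₁) (W₂ : Retr X₂) : Mono (wedgeToProd W₁ W₂) :=
  Adhesive.mono_of_isPullback_of_isPushout
    ((IsPullback.id_vert W₁.s).prod_map (IsPullback.id_horiz W₂.s))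
    (IsPushout.of_hasPushout _ _) (pushout.inl_desc _ _ _) (pushout.inr_desc _ _ _)

variable {W₁ W₁' : Retr X₁} {W₂ W₂' : Retr X₂} (φ₁ : RHom W₁ W₁') (φ₂ : RHom W₂ W₂')

theorem wedgeMap_wedgeToBase : wedgeMap φ₁ φ₂ ≫ wedgeToBase W₁' W₂' = wedgeToBase W₁ W₂ := by
  apply pushout.hom_ext <;> simp [wedgeMap, wedgeToBase, prod.map_map, φ₁.hr, φ₂.hr]

theorem isPullback_wedgeMap [Mono φ₁.f] [Mono φ₂.f] :
    IsPullback (wedgeMap φ₁ φ₂) (wedgeToProd W₁ W₂) (wedgeToProd W₁' W₂')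
      (prod.map φ₁.f φ₂.f) := by
  refine Adhesive.isPullback_of_isPushout_of_isPullback (IsPushout.of_hasPushout _ _)
    (IsPushout.of_hasPushout _ _) (αW := 𝟙 _) (αX := prod.map φ₁.f (𝟙 X₂))
    (αY := prod.map (𝟙 X₁) φ₂.f)
    (IsPullback.of_horiz_isIso_mono ⟨by simp [prod.map_map, φ₁.hs]⟩).flip
    (IsPullback.of_horiz_isIso_mono ⟨by simp [prod.map_map, φ₂.hs]⟩).flip
    (by simp [wedgeMap]) (by simp [wedgeMap]) ?_ ?_
  · simpa only [wedgeToProd, pushout.inl_desc] using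
      (IsPullback.id_horiz φ₁.f).prod_map (RHom.isPullback_s φ₂).flip
  · simpa only [wedgeToProd, pushout.inr_desc] using
      (RHom.isPullback_s φ₁).flip.prod_map (IsPullback.id_horiz φ₂.f)

end Retr

/-- **Exterior smash preserves cofibrations.**  If `φ₁ : W₁ ⟶ W₁'` and `φ₂ : W₂ ⟶ W₂'`
are maps of retractive simplicial sets over `X₁` resp. `X₂` whose underlying maps of
simplicial sets are monomorphisms, then the induced map `W₁ ⊼ W₂ ⟶ W₁' ⊼ W₂'` has
underlying map a monomorphism. -/
theorem esmash_preserves_mono {X₁ X₂ : SSet} {W₁ W₁' : Retr X₁} {W₂ W₂' : Retr X₂}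
    (φ₁ : RHom W₁ W₁') (φ₂ : RHom W₂ W₂') (h₁ : Mono φ₁.f) (h₂ : Mono φ₂.f) :
    Mono (esmashMap φ₁ φ₂).f :=
  Adhesive.mono_of_isPushout_of_isPushout_of_isPullback (IsPushout.of_hasPushout _ _)
    (IsPushout.of_hasPushout _ _) (wedgeMap_wedgeToBase φ₁ φ₂) (isPullback_wedgeMap φ₁ φ₂)
    (by simp [esmashMap]) (by simp [esmashMap])
end

section
/- (Homotopy uniqueness of induced maps over the injection category.) Let F be the category whose objects are the finite subsets of ℕ and whose morphisms are the injective functions between them. Let T be a functor from F to topological spaces such that for every morphism i of F the continuous map T(i) is a homotopy equivalence. Then for every pair of morphisms i, j : x ⟶ y in F, the continuous maps T(i) and T(j) are homotopic. -/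
open CategoryTheory Limits

/-- The category of finite subsets of `ℕ`, with morphisms the injective functions
between them. -/
structure FinInj where
  s : Finset ℕ

instance : Category FinInj where
  Hom a b := { f : {x // x ∈ a.s} → {x // x ∈ b.s} // Function.Injective f }
  id _ := ⟨id, fun _ _ h => h⟩
  comp f g := ⟨g.1 ∘ f.1, g.2.comp f.2⟩
  id_comp _ := Subtype.ext rfl
  comp_id _ := Subtype.ext rfl
  assoc _ _ _ := Subtype.ext rfl

/-- A morphism of topological spaces is a homotopy equivalence if it admits a homotopy
inverse. -/
def IsHtpyEquiv {A B : TopCat} (f : A ⟶ B) : Prop :=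
  ∃ g : C(B, A), (g.comp f.hom).Homotopic (ContinuousMap.id A) ∧
    ((f.hom : C(A, B)).comp g).Homotopic (ContinuousMap.id B)

/-!
The empty set is initial in `FinInj`, so `i` and `j` agree after precomposition with
`ε : ∅ ⟶ x`. Since `T ε` has a homotopy section, precomposition with it is injective on
homotopy classes, whence `T i ≃ T j`.
-/

namespace FinInj

def empty : FinInj := ⟨∅⟩

def isInitialEmpty : IsInitial empty :=
  IsInitial.ofUniqueHom
    (fun _ => ⟨fun a => absurd a.2 (Finset.notMem_empty _),
      fun a => absurd a.2 (Finset.notMem_empty _)⟩)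
    (fun _ _ => Subtype.ext (funext fun a => absurd a.2 (Finset.notMem_empty _)))

end FinInj

namespace ContinuousMap

variable {X Y Z : Type*} [TopologicalSpace X] [TopologicalSpace Y] [TopologicalSpace Z]

theorem Homotopic.of_comp_eq_comp_of_homotopic_section {f : C(X, Y)} {s : C(Y, X)}
    (hs : (f.comp s).Homotopic (ContinuousMap.id Y)) {u v : C(Y, Z)}
    (huv : u.comp f = v.comp f) : u.Homotopic v := by
  have hu : ((u.comp f).comp s).Homotopic u := by
    simpa only [comp_assoc, comp_id] using (Homotopic.refl u).comp hs
  have hv : ((v.comp f).comp s).Homotopic v := by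
    simpa only [comp_assoc, comp_id] using (Homotopic.refl v).comp hs
  exact hu.symm.trans (huv ▸ hv)

end ContinuousMap

/-- **Homotopy uniqueness of induced maps over the injection category.**  If
`T : FinInj ⥤ TopCat` sends every morphism to a homotopy equivalence, then for every pair
of morphisms `i, j : x ⟶ y` in `FinInj` the maps `T.map i` and `T.map j` are
homotopic. -/
theorem homotopy_uniqueness_over_injection_category (T : FinInj ⥤ TopCat)
    (hT : ∀ {x y : FinInj} (i : x ⟶ y), IsHtpyEquiv (T.map i)) :
    ∀ {x y : FinInj} (i j : x ⟶ y),
      ContinuousMap.Homotopic ((T.map i).hom : C(T.obj x, T.obj y)) (T.map j).hom := by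
  intro x y i j
  let ε := FinInj.isInitialEmpty.to x
  obtain ⟨s, -, hs⟩ := hT ε
  refine ContinuousMap.Homotopic.of_comp_eq_comp_of_homotopic_section hs ?_
  rw [← TopCat.hom_comp, ← TopCat.hom_comp, ← T.map_comp, ← T.map_comp,
    FinInj.isInitialEmpty.hom_ext (ε ≫ i) (ε ≫ j)]
end
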